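/- arXiv:1805.04378 — 2 statements merged into one kernel-verified Lean document; each statement's English description precedes it below -/
import Mathlib

section
/- For every integer k ≥ 5, the complete bipartite graph K_{2,k−2} does not have the F_k property. Specifically, if x₁, x₂ are the two vertices of degree k−2 and x₃,…,x_k are the k−2 vertices of degree 2, then there is no x₁x₂-hamiltonian path in (K_{2,k−2})² containing k−2 pairwise distinct edges x_iy_i ∈ E(K_{2,k−2}), i = 3,…,k. -/
open SimpleGraph

/-- The square of a simple graph: two distinct vertices are adjacent iff their distance
in `G` is at most 2, i.e. they are adjacent in `G` or have a common neighbour. -/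
def SimpleGraph.square {V : Type*} (G : SimpleGraph V) : SimpleGraph V :=
  SimpleGraph.fromRel (fun u v => G.Adj u v ∨ ∃ w, G.Adj u w ∧ G.Adj w v)

/-- A graph is 2-connected if it has at least 3 vertices, is connected, and deleting any
single vertex leaves it connected. -/
def SimpleGraph.TwoConnected {V : Type*} (G : SimpleGraph V) : Prop :=
  3 ≤ Nat.card V ∧ G.Connected ∧ ∀ v : V, (G.induce ({v}ᶜ : Set V)).Connected

/-- In a path, at most one edge is incident to the starting vertex. -/
lemma start_edge_unique {V : Type*} {G : SimpleGraph V} {u v : V}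
    (p : G.Walk u v) (hp : p.IsPath) {e₁ e₂ : Sym2 V}
    (h1 : e₁ ∈ p.edges) (h2 : e₂ ∈ p.edges) (m1 : u ∈ e₁) (m2 : u ∈ e₂) : e₁ = e₂ := by
  cases p with
  | nil => simp at h1
  | @cons _ b _ h q =>
    rw [Walk.cons_isPath_iff] at hp
    have key : ∀ e ∈ q.edges, u ∈ e → e = s(u, b) := by
      intro e he hu
      exfalso
      induction e with
      | h x y =>
        rcases Sym2.mem_iff.mp hu with rfl | rfl
        · exact hp.2 (q.fst_mem_support_of_mem_edges he)
        · exact hp.2 (q.snd_mem_support_of_mem_edges he)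
    simp only [Walk.edges_cons, List.mem_cons] at h1 h2
    rcases h1 with rfl | h1
    · rcases h2 with rfl | h2
      · rfl
      · exact (key _ h2 m2).symm
    · rcases h2 with rfl | h2
      · exact key _ h1 m1
      · rw [key _ h1 m1, key _ h2 m2]

/-- `K_{2,k-2}` does not have the F_k property, for `k ≥ 5`: there is no hamiltonian path
between the two vertices of degree `k-2` in the square containing `k-2` pairwise distinct
edges of the graph, one incident to each vertex of degree 2. -/
theorem completeBipartite_not_Fk (k : ℕ) (hk : 5 ≤ k) :
    ¬ ∃ p : (completeBipartiteGraph (Fin 2) (Fin (k - 2))).square.Walk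
        (Sum.inl 0) (Sum.inl 1),
      p.IsHamiltonian ∧
        ∃ y : Fin (k - 2) → (Fin 2 ⊕ Fin (k - 2)),
          (∀ j : Fin (k - 2),
              (completeBipartiteGraph (Fin 2) (Fin (k - 2))).Adj (Sum.inr j) (y j) ∧
              s(Sum.inr j, y j) ∈ p.edges) ∧
          Function.Injective (fun j : Fin (k - 2) => s(Sum.inr j, y j)) := by
  rintro ⟨p, hham, y, hy, hinj⟩
  have hp := hham.isPath
  have hleft : ∀ j, ∃ i : Fin 2, y j = Sum.inl i := by
    intro j
    have h := (hy j).1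
    rcases hyj : y j with i | j'
    · exact ⟨i, rfl⟩
    · rw [hyj] at h; simp at h
  choose f hf using hleft
  obtain ⟨j₁, j₂, hne, heq⟩ := Fintype.exists_ne_map_eq_of_card_lt f (by simp; omega)
  have he₁ := (hy j₁).2
  have he₂ := (hy j₂).2
  rw [hf j₁] at he₁
  rw [hf j₂, ← heq] at he₂
  have hdist : s(Sum.inr j₁, (Sum.inl (f j₁) : Fin 2 ⊕ Fin (k-2))) ≠
      s(Sum.inr j₂, Sum.inl (f j₁)) := by
    intro hEq
    rcases Sym2.eq_iff.mp hEq with ⟨h, -⟩ | ⟨h, -⟩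
    · exact hne (Sum.inr_injective h)
    · exact absurd h (by simp)
  have hmem : (Sum.inl (f j₁) : Fin 2 ⊕ Fin (k-2)) ∈
      s(Sum.inr j₁, (Sum.inl (f j₁) : Fin 2 ⊕ Fin (k-2))) := by simp
  have hmem2 : (Sum.inl (f j₁) : Fin 2 ⊕ Fin (k-2)) ∈
      s(Sum.inr j₂, (Sum.inl (f j₁) : Fin 2 ⊕ Fin (k-2))) := by simp
  have h01 : ∀ i : Fin 2, i = 0 ∨ i = 1 := by decide
  rcases h01 (f j₁) with h | h
  all_goals rw [h] at he₁ he₂ hdist hmem hmem2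
  · exact hdist (start_edge_unique p hp he₁ he₂ hmem hmem2)
  · refine hdist (start_edge_unique p.reverse hp.reverse ?_ ?_ hmem hmem2) <;>
      simpa [Walk.edges_reverse]
end

section
/- Let G be a graph having the F̄ property, i.e., G has three distinct vertices x, y, z, each of degree 2, with N(x) = N(y) = N(z). Then for every integer k ≥ 5 with |V(G)| ≥ k, the graph G does not have the F_k property. -/
open SimpleGraph

/-!
Take the two common neighbours `a, b` of `x, y, z` as the prescribed ends `x₁, x₂` of the
path and `x, y, z` as `x₃, x₄, x₅`. Each required edge at `x`, `y` or `z` goes to `a` or `b`,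
that is, to an end of the path; but a path edge at an end joins it to the second or to the
penultimate vertex. So two of `x, y, z` would coincide.
-/

lemma Fin.exists_injective_append {α : Type*} [Finite α] {m n : ℕ} {f : Fin m → α}
    (hf : Function.Injective f) (h : m + n ≤ Nat.card α) :
    ∃ g : Fin n → α, Function.Injective (Fin.append f g) := by
  classical
  have := Fintype.ofFinite α
  have hcard : Fintype.card (Fin n) ≤ (Finset.univ.image f)ᶜ.card := by
    rw [Finset.card_compl, Finset.card_image_of_injective _ hf, Finset.card_univ,
      Fintype.card_fin, Fintype.card_fin, ← Nat.card_eq_fintype_card]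
    omega
  obtain ⟨g, hg⟩ := Function.Embedding.exists_of_card_le_finset hcard
  refine ⟨g, Fin.append_injective_iff.2 ⟨hf, g.injective, fun i j hij => ?_⟩⟩
  have hj : g j ∉ Set.range f := by simpa using hg (Set.mem_range_self j)
  exact hj ⟨i, hij⟩

lemma SimpleGraph.Walk.IsPath.eq_snd_or_eq_penultimate_of_neighborSet_eq {V : Type*}
    {G H : SimpleGraph V} {u v c d : V} {p : G.Walk u v} (hp : p.IsPath)
    (hN : H.neighborSet c = {u, v}) (hcd : H.Adj c d) (hd : s(c, d) ∈ p.edges) :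
    c = p.snd ∨ c = p.penultimate := by
  have hd_mem : d ∈ H.neighborSet c := hcd
  rw [hN] at hd_mem
  rcases hd_mem with rfl | rfl
  · exact .inl (hp.eq_snd_of_mem_edges (Sym2.eq_swap ▸ hd))
  · exact .inr (hp.eq_penultimate_of_mem_edges (Sym2.eq_swap ▸ hd))

/-- If `G` has three distinct 2-valent vertices `x, y, z` with `N(x) = N(y) = N(z)`
(the F̄ property), then `G` does not have the F_k property for any `k ≥ 5` with
`k ≤ |V(G)|`. -/
theorem Fbar_not_Fk {V : Type*} [DecidableEq V] (G : SimpleGraph V) (x y z : V)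
    (hxy : x ≠ y) (hxz : x ≠ z) (hyz : y ≠ z)
    (hdx : (G.neighborSet x).ncard = 2)
    (hNxy : G.neighborSet x = G.neighborSet y) (hNyz : G.neighborSet y = G.neighborSet z)
    (k : ℕ) (hk : 5 ≤ k) (hcard : k ≤ Nat.card V) :
    ¬ (∀ v : Fin k → V, Function.Injective v →
        ∃ p : G.square.Walk (v ⟨0, by omega⟩) (v ⟨1, by omega⟩), p.IsHamiltonian ∧
          ∃ w : Fin k → V,
            (∀ i : Fin k, 2 ≤ i.val → G.Adj (v i) (w i) ∧ s(v i, w i) ∈ p.edges) ∧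
            (∀ i j : Fin k, 2 ≤ i.val → 2 ≤ j.val → i ≠ j →
              s(v i, w i) ≠ s(v j, w j))) := by
  intro hFk
  obtain ⟨a, b, hab, hNx⟩ := Set.ncard_eq_two.mp hdx
  have hNy : G.neighborSet y = {a, b} := hNxy ▸ hNx
  have hNz : G.neighborSet z = {a, b} := hNyz ▸ hNy
  have hx_nb : x ≠ a ∧ x ≠ b := by simpa [hNx] using G.notMem_neighborSet_self (a := x)
  have hy_nb : y ≠ a ∧ y ≠ b := by simpa [hNy] using G.notMem_neighborSet_self (a := y)
  have hz_nb : z ≠ a ∧ z ≠ b := by simpa [hNz] using G.notMem_neighborSet_self (a := z)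
  have hinj : Function.Injective ![a, b, x, y, z] := by
    intro i j
    fin_cases i <;> fin_cases j <;> simp [hab, hxy, hxz, hyz, hx_nb, hy_nb, hz_nb, eq_comm]
  have : Finite V := Nat.finite_of_card_ne_zero (by omega)
  obtain ⟨n, rfl⟩ : ∃ n, k = 5 + n := ⟨k - 5, by omega⟩
  obtain ⟨g, hg⟩ := Fin.exists_injective_append hinj hcard
  obtain ⟨p, hp, w, hw, -⟩ := hFk _ hg
  have hend (i : Fin 5) (hi : 2 ≤ i.val) (hN : G.neighborSet (![a, b, x, y, z] i) = {a, b}) :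
      ![a, b, x, y, z] i = p.snd ∨ ![a, b, x, y, z] i = p.penultimate := by
    have hwi := hw (Fin.castAdd n i) hi
    rw [Fin.append_left] at hwi
    exact hp.isPath.eq_snd_or_eq_penultimate_of_neighborSet_eq hN hwi.1 hwi.2
  have hx : x = p.snd ∨ x = p.penultimate := hend 2 le_rfl hNx
  have hy : y = p.snd ∨ y = p.penultimate := hend 3 (by decide) hNy
  have hz : z = p.snd ∨ z = p.penultimate := hend 4 (by decide) hNz
  grind
end
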